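/- arXiv:1404.3455 — 4 statements merged into one kernel-verified Lean document; each statement's English description precedes it below -/
import Mathlib

section
/- For any finite poset P, piecewise-linear rowmotion factors through Stanley's transfer map: ρ_P = α1∘α3∘α2 as maps on the order polytope O(P), where α2 : O(P) → C(P) is the transfer map (α2 f)(x) = min{ f(x)−f(y) : y ∈ P̂, y is covered by x }, α3 is defined by the downward recursion (α3 g)(x) = g(x) + max{ (α3 g)(y) : y ∈ P̂, y covers x } with (α3 g)(1̂) = 0, and (α1 h)(x) = 1 − h(x). -/
open scoped Classical

noncomputable section

instance {α : Type*} [Fintype α] : Fintype (WithTop α) := inferInstanceAs (Fintype (Option α))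
instance {α : Type*} [Fintype α] : Fintype (WithBot α) := inferInstanceAs (Fintype (Option α))

variable {P : Type*} [Fintype P] [PartialOrder P]

/-- The embedding of `P` into `P̂ = WithBot (WithTop P)`, the poset obtained from `P` by
adjoining a new minimum `⊥` and a new maximum `⊤`. -/
def emb (x : P) : WithBot (WithTop P) := ((x : WithTop P) : WithBot (WithTop P))

/-- Extend `f : P → ℝ` to `P̂` with value `v0` at the new minimum and `v1` at the new maximum. -/
def extendHat (v0 v1 : ℝ) (f : P → ℝ) : WithBot (WithTop P) → ℝ :=
  WithBot.recBotCoe v0 (WithTop.recTopCoe v1 f)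

/-- `L`: the maximum of the (extended, with `f(0̂) = 0`) values at elements of `P̂` covered by `x`. -/
def plL (f : P → ℝ) (x : P) : ℝ := sSup (extendHat 0 1 f '' {y | y ⋖ emb x})

/-- `R`: the minimum of the (extended, with `f(1̂) = 1`) values at elements of `P̂` covering `x`. -/
def plR (f : P → ℝ) (x : P) : ℝ := sInf (extendHat 0 1 f '' {y | emb x ⋖ y})

/-- The piecewise-linear toggle at `x`. -/
def plToggle (x : P) (f : P → ℝ) : P → ℝ :=
  Function.update f x (plL f x + plR f x - f x)

/-- `xs` is a linear extension of `P`: an enumeration of all elements such that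
`x_i < x_j` in `P` implies `i < j`. -/
def IsLinearExt (xs : List P) : Prop :=
  xs.Nodup ∧ (∀ x : P, x ∈ xs) ∧ xs.Pairwise fun u v => ¬ v < u

/-- Piecewise-linear rowmotion along the linear extension `xs = [x₁, …, x_p]`:
the composite `τ_{x₁} ∘ ⋯ ∘ τ_{x_p}` (toggling from top to bottom). -/
def plRow (xs : List P) (f : P → ℝ) : P → ℝ := xs.foldr plToggle f

/-- Membership in the order polytope `O(P)`. -/
def InOrderPolytope (f : P → ℝ) : Prop :=
  Monotone f ∧ ∀ x, 0 ≤ f x ∧ f x ≤ 1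

/-- `L`: the sum of the (extended, with `f(0̂) = 1`) values at elements of `P̂` covered by `x`. -/
def bL (f : P → ℝ) (x : P) : ℝ :=
  ∑ y : WithBot (WithTop P), if y ⋖ emb x then extendHat 1 1 f y else 0

/-- `R`: the parallel sum of the (extended, with `f(1̂) = 1`) values at elements of `P̂`
covering `x`. -/
def bR (f : P → ℝ) (x : P) : ℝ :=
  (∑ y : WithBot (WithTop P), if emb x ⋖ y then (extendHat 1 1 f y)⁻¹ else 0)⁻¹

/-- The birational toggle at `x`. -/
def bToggle (x : P) (f : P → ℝ) : P → ℝ :=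
  Function.update f x (bL f x * bR f x / f x)

/-- Birational rowmotion along the linear extension `xs = [x₁, …, x_p]`:
the composite `τ_{x₁} ∘ ⋯ ∘ τ_{x_p}` (toggling from top to bottom). -/
def bRow (xs : List P) (f : P → ℝ) : P → ℝ := xs.foldr bToggle f

/-- The `k`-th file of `[a] × [b]` (in `Fin a × Fin b` coordinates, where `(i,j) : Fin a × Fin b`
corresponds to `(i+1, j+1) ∈ [a] × [b]`): the condition `j - i = k - a` (1-based). -/
def InFile (a b k : ℕ) (x : Fin a × Fin b) : Prop :=
  ((x.2 : ℤ) - (x.1 : ℤ) = (k : ℤ) - (a : ℤ))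

/-- The piecewise-linear file-toggle `τ_k^*`: simultaneously toggle all elements of the `k`-th
file (these toggles commute, and none reads another's value, so this is their composition). -/
def plFileToggle (a b : ℕ) (k : ℕ) (f : Fin a × Fin b → ℝ) : Fin a × Fin b → ℝ :=
  fun x => if InFile a b k x then plL f x + plR f x - f x else f x

/-- Piecewise-linear promotion `π_P = τ_{n-1}^* ∘ ⋯ ∘ τ_1^*` (file 1 toggled first). -/
def plPromo (a b : ℕ) (f : Fin a × Fin b → ℝ) : Fin a × Fin b → ℝ :=
  (List.range (a + b - 1)).foldl (fun g k => plFileToggle a b (k + 1) g) f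

/-- The birational file-toggle `τ_k^*`. -/
def bFileToggle (a b k : ℕ) (f : Fin a × Fin b → ℝ) : Fin a × Fin b → ℝ :=
  fun x => if InFile a b k x then bL f x * bR f x / f x else f x

/-- Birational promotion `π_B = τ_{n-1}^* ∘ ⋯ ∘ τ_1^*` (file 1 toggled first). -/
def bPromo (a b : ℕ) (f : Fin a × Fin b → ℝ) : Fin a × Fin b → ℝ :=
  (List.range (a + b - 1)).foldl (fun g k => bFileToggle a b (k + 1) g) f

/-- The antipode map `(i, j) ↦ (a + 1 - i, b + 1 - j)` (in 1-based coordinates). -/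
def antipode {a b : ℕ} (x : Fin a × Fin b) : Fin a × Fin b := (x.1.rev, x.2.rev)

/-- `p_k`: the product of the values of `f` over the `k`-th file (equal to `1` for `k = 0`
and `k = a + b`, since those files are empty). -/
def fileProd (a b : ℕ) (f : Fin a × Fin b → ℝ) (k : ℕ) : ℝ :=
  ∏ x : Fin a × Fin b, if InFile a b k x then f x else 1

/-- The quotient sequence `Q(f) = (q_1, …, q_n)`, `q_k = p_k / p_{k-1}`. -/
def quotSeq (a b : ℕ) (f : Fin a × Fin b → ℝ) (k : ℕ) : ℝ :=
  fileProd a b f k / fileProd a b f (k - 1)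

/-- Stanley's transfer map `α₂ = Φ`: `(α₂ f)(x) = min { f(x) - f(y) : y ∈ P̂, y ⋖ x }`. -/
def alpha2PL {P : Type*} [Fintype P] [PartialOrder P] (f : P → ℝ) (x : P) : ℝ :=
  sInf ((fun y => f x - extendHat 0 1 f y) '' {y | y ⋖ emb x})

/-! When `τ_u` is applied in `τ_{x₁} ∘ ⋯ ∘ τ_{x_p}`, every element above `u` already carries its
final value `1 - A`, while `u` and the elements below it still carry `f`. The toggle therefore
produces `L + R - f(u) = L + (1 - max_{y ⋗ u} A(y)) - f(u) = 1 - ((α₂ f)(u) + max_{y ⋗ u} A(y))`,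
which is `1 - A(u)` by the recursion defining `A`. -/

theorem sInf_const_sub_image {T : Set ℝ} (hne : T.Nonempty) (hT : BddAbove T) (c : ℝ) :
    sInf ((c - ·) '' T) = c - sSup T :=
  ((show Antitone (c - ·) from fun _ _ h => sub_le_sub_left h c).map_csSup_of_continuousAt
    (by fun_prop) hne hT).symm

omit [Fintype P] [PartialOrder P] in
@[simp]
theorem extendHat_emb (v0 v1 : ℝ) (f : P → ℝ) (x : P) : extendHat v0 v1 f (emb x) = f x := rfl

omit [Fintype P] [PartialOrder P] in
theorem extendHat_top (v0 v1 : ℝ) (f : P → ℝ) :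
    extendHat v0 v1 f ((⊤ : WithTop P) : WithBot (WithTop P)) = v1 := rfl

theorem nonempty_setOf_emb_covBy (x : P) : {y | emb x ⋖ y}.Nonempty :=
  exists_covBy_of_wellFoundedLT fun h =>
    (WithBot.coe_lt_coe.2 (WithTop.coe_lt_top x)).not_ge (h le_top)

theorem nonempty_setOf_covBy_emb (x : P) : {y | y ⋖ emb x}.Nonempty :=
  exists_covBy_of_wellFoundedGT fun h => (WithBot.bot_lt_coe _).not_ge (h bot_le)

omit [Fintype P] in
theorem eq_bot_or_exists_emb_of_lt_emb {y : WithBot (WithTop P)} {x : P} (h : y < emb x) :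
    y = ⊥ ∨ ∃ z < x, y = emb z := by
  induction y using WithBot.recBotCoe with
  | bot => exact Or.inl rfl
  | coe a =>
    induction a using WithTop.recTopCoe with
    | top => exact absurd (WithBot.coe_lt_coe.1 h) not_top_lt
    | coe z => exact Or.inr ⟨z, WithTop.coe_lt_coe.1 (WithBot.coe_lt_coe.1 h), rfl⟩

omit [Fintype P] in
theorem eq_top_or_exists_emb_of_emb_lt {y : WithBot (WithTop P)} {x : P} (h : emb x < y) :
    y = ((⊤ : WithTop P) : WithBot (WithTop P)) ∨ ∃ z, x < z ∧ y = emb z := by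
  induction y using WithBot.recBotCoe with
  | bot => exact absurd h not_lt_bot
  | coe a =>
    induction a using WithTop.recTopCoe with
    | top => exact Or.inl rfl
    | coe z => exact Or.inr ⟨z, WithTop.coe_lt_coe.1 (WithBot.coe_lt_coe.1 h), rfl⟩

theorem alpha2PL_eq_sub_plL (f : P → ℝ) (x : P) : alpha2PL f x = f x - plL f x := by
  rw [alpha2PL, plL,
    ← sInf_const_sub_image (.image (extendHat 0 1 f) (nonempty_setOf_covBy_emb x))
      ((Set.toFinite _).image _).bddAbove, Set.image_image]

omit [Fintype P] in
theorem plL_congr {g h : P → ℝ} {x : P} (hgh : ∀ z < x, g z = h z) : plL g x = plL h x := by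
  refine congrArg sSup (Set.image_congr fun y hy => ?_)
  rcases eq_bot_or_exists_emb_of_lt_emb hy.lt with rfl | ⟨z, hz, rfl⟩
  · rfl
  · simpa using hgh z hz

theorem plR_eq_one_sub_sSup {h : P → ℝ} {x : P} (A : WithBot (WithTop P) → ℝ)
    (hA1 : A ((⊤ : WithTop P) : WithBot (WithTop P)) = 0)
    (hA : ∀ z, x < z → h z = 1 - A (emb z)) :
    plR h x = 1 - sSup (A '' {y | emb x ⋖ y}) := by
  have hcov : extendHat 0 1 h '' {y | emb x ⋖ y} = (1 - A ·) '' {y | emb x ⋖ y} := by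
    refine Set.image_congr fun y hy => ?_
    rcases eq_top_or_exists_emb_of_emb_lt hy.lt with rfl | ⟨z, hz, rfl⟩
    · rw [extendHat_top, hA1, sub_zero]
    · simpa using hA z hz
  rw [plR, hcov, ← sInf_const_sub_image (.image A (nonempty_setOf_emb_covBy x))
    ((Set.toFinite _).image _).bddAbove, Set.image_image]

theorem plToggle_self_eq_one_sub {f h : P → ℝ} {u : P} (A : WithBot (WithTop P) → ℝ)
    (hA1 : A ((⊤ : WithTop P) : WithBot (WithTop P)) = 0)
    (hA2 : A (emb u) = alpha2PL f u + sSup (A '' {y | emb u ⋖ y}))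
    (hle : ∀ z ≤ u, h z = f z) (hlt : ∀ z, u < z → h z = 1 - A (emb z)) :
    plToggle u h u = 1 - A (emb u) := by
  rw [plToggle, Function.update_self, plL_congr fun z hz => hle z hz.le,
    plR_eq_one_sub_sSup A hA1 hlt, hle u le_rfl, hA2, alpha2PL_eq_sub_plL]
  ring

theorem plRow_eq_ite (f : P → ℝ) (A : WithBot (WithTop P) → ℝ)
    (hA1 : A ((⊤ : WithTop P) : WithBot (WithTop P)) = 0)
    (hA2 : ∀ x : P, A (emb x) = alpha2PL f x + sSup (A '' {y | emb x ⋖ y})) :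
    ∀ ys : List P, ys.Nodup → ys.Pairwise (fun u v => ¬ v < u) → IsUpperSet {x | x ∈ ys} →
      ∀ x, plRow ys f x = if x ∈ ys then 1 - A (emb x) else f x
  | [], _, _, _, _ => by simp [plRow]
  | u :: t, hnd, hpw, hup, x => by
    obtain ⟨hut, hndt⟩ := List.nodup_cons.1 hnd
    obtain ⟨hnlt, hpwt⟩ := List.pairwise_cons.1 hpw
    have hupt : IsUpperSet {x | x ∈ t} := by
      intro v z hvz hv
      rcases List.mem_cons.1 (hup hvz (List.mem_cons_of_mem u hv)) with rfl | hzt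
      · rcases hvz.lt_or_eq with hvz | rfl
        exacts [absurd hvz (hnlt v hv), absurd hv hut]
      · exact hzt
    have ih := plRow_eq_ite f A hA1 hA2 t hndt hpwt hupt
    have hrow : plRow (u :: t) f = plToggle u (plRow t f) := rfl
    by_cases hx : x = u
    · subst hx
      rw [hrow, if_pos List.mem_cons_self]
      refine plToggle_self_eq_one_sub A hA1 (hA2 x) (fun z hz => ?_) (fun z hz => ?_)
      · rw [ih, if_neg]
        rintro hzt
        rcases hz.lt_or_eq with hz | rfl
        exacts [hnlt z hzt hz, hut hzt]
      · have hzt : z ∈ t := (List.mem_cons.1 (hup hz.le List.mem_cons_self)).resolve_left hz.ne'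
        rw [ih, if_pos hzt]
    · rw [hrow, plToggle, Function.update_of_ne hx, ih]
      simp [hx]

theorem stmt2_general {P : Type*} [Fintype P] [PartialOrder P]
    (xs : List P) (hxs : IsLinearExt xs)
    (f : P → ℝ)
    (A : WithBot (WithTop P) → ℝ)
    (hA1 : A ((⊤ : WithTop P) : WithBot (WithTop P)) = 0)
    (hA2 : ∀ x : P, A (emb x) = alpha2PL f x + sSup (A '' {y | emb x ⋖ y})) :
    ∀ x : P, plRow xs f x = 1 - A (emb x) := by
  intro x
  obtain ⟨hnd, hall, hpw⟩ := hxs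
  rw [plRow_eq_ite f A hA1 hA2 xs hnd hpw (fun _ z _ _ => hall z) x, if_pos (hall x)]

/-- `ρ_P = α₁ ∘ α₃ ∘ α₂` on the order polytope: if `A` realizes the downward recursion defining
`α₃ (α₂ f)` (with `A(1̂) = 0` and `A(x) = (α₂ f)(x) + max { A(y) : y ∈ P̂, y ⋗ x }`), then
`(ρ_P f)(x) = 1 - A(x)` for all `x ∈ P`. -/
theorem stmt2 {P : Type*} [Fintype P] [PartialOrder P]
    (xs : List P) (hxs : IsLinearExt xs)
    (f : P → ℝ) (hf : InOrderPolytope f)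
    (A : WithBot (WithTop P) → ℝ)
    (hA1 : A ((⊤ : WithTop P) : WithBot (WithTop P)) = 0)
    (hA2 : ∀ x : P, A (emb x) = alpha2PL f x + sSup (A '' {y | emb x ⋖ y})) :
    ∀ x : P, plRow xs f x = 1 - A (emb x) :=
  stmt2_general xs hxs f A hA1 hA2

end
end

section
/- For any finite poset P, birational rowmotion factors as ρ_B = α1∘α3∘α2 as maps on (ℝ>0)^P, where (α2 f)(x) = ( Σ_{y ∈ P̂, y covered by x} f(y)/f(x) )⁻¹ (the parallel sum of the quotients f(x)/f(y) over the elements y covered by x), α3 is defined by the downward recursion (α3 g)(x) = g(x) · Σ_{y ∈ P̂, y covers x} (α3 g)(y) with (α3 g)(1̂) = 1, and (α1 h)(x) = 1/h(x). -/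
open scoped Classical

noncomputable section

variable {P : Type*} [Fintype P] [PartialOrder P]

/-- The birational transfer map `α₂`: `(α₂ f)(x)` is the parallel sum of the quotients
`f(x)/f(y)` over the elements `y ∈ P̂` covered by `x`, i.e. `(Σ_{y ⋖ x} f(y)/f(x))⁻¹`. -/
def alpha2B {P : Type*} [Fintype P] [PartialOrder P] (f : P → ℝ) (x : P) : ℝ :=
  (∑ y : WithBot (WithTop P), if y ⋖ emb x then extendHat 1 1 f y / f x else 0)⁻¹

/-! Toggling along a linear extension from the top down, at the moment `x` is toggled every
element above `x` already carries its final value and every element below `x` still its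
original one. So `τ_x` replaces `f x` by `L · R / f x`, where `L = Σ_{y ⋖ x} f y` is untouched
and, by induction over the upper sets already toggled, `R⁻¹ = Σ_{y ⋗ x} A y`; since
`(α₂ f)(x) = f x / L`, this value is `((α₂ f)(x) · Σ_{y ⋗ x} A y)⁻¹ = (A x)⁻¹`. -/

theorem emb_lt_emb {P : Type*} [PartialOrder P] {x y : P} : emb x < emb y ↔ x < y := by
  simp [emb]

theorem alpha2B_eq_div_bL (f : P → ℝ) (x : P) : alpha2B f x = f x / bL f x := by
  rw [alpha2B, bL, ← inv_div, Finset.sum_div]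
  simp only [ite_div, zero_div]

theorem bToggle_apply_self (f : P → ℝ) (x : P) :
    bToggle x f x = (alpha2B f x * (bR f x)⁻¹)⁻¹ := by
  rw [bToggle, Function.update_self, alpha2B_eq_div_bL, mul_inv, inv_div, inv_inv]
  ring

theorem bRow_apply_of_not_mem {ys : List P} {x : P} (f : P → ℝ) (hx : x ∉ ys) :
    bRow ys f x = f x := by
  induction ys with
  | nil => rfl
  | cons y ys ih =>
    rw [List.mem_cons, not_or] at hx
    exact (Function.update_of_ne hx.1 _ _).trans (ih hx.2)

theorem bL_congr {f g : P → ℝ} {x : P} (h : ∀ u, u < x → g u = f u) : bL g x = bL f x := by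
  refine Finset.sum_congr rfl fun y _ => ?_
  split_ifs with hy
  · induction y using WithBot.recBotCoe with
    | bot => rfl
    | coe z =>
      induction z using WithTop.recTopCoe with
      | top => exact absurd hy.1 (by simp [emb])
      | coe u => exact h u (emb_lt_emb.1 hy.1)
  · rfl

theorem bR_eq_inv_sum {f : P → ℝ} {A : WithBot (WithTop P) → ℝ} {x : P}
    (hA1 : A ((⊤ : WithTop P) : WithBot (WithTop P)) = 1)
    (h : ∀ u, x < u → f u = (A (emb u))⁻¹) :
    bR f x = (∑ y : WithBot (WithTop P), if emb x ⋖ y then A y else 0)⁻¹ := by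
  refine congrArg Inv.inv (Finset.sum_congr rfl fun y _ => ?_)
  split_ifs with hy
  · induction y using WithBot.recBotCoe with
    | bot => exact absurd hy.1 (by simp)
    | coe z =>
      induction z using WithTop.recTopCoe with
      | top => exact inv_one.trans hA1.symm
      | coe u => exact (congrArg Inv.inv (h u (emb_lt_emb.1 hy.1))).trans (inv_inv _)
  · rfl

theorem isUpperSet_of_cons {P : Type*} [PartialOrder P] {x : P} {t : List P}
    (hpw : (x :: t).Pairwise fun u v => ¬ v < u)
    (hup : IsUpperSet {y | y ∈ x :: t}) : IsUpperSet {y | y ∈ t} := by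
  intro a b hab ha
  rcases List.mem_cons.mp (hup hab (List.mem_cons_of_mem x ha)) with rfl | hb
  · rcases hab.lt_or_eq with hlt | rfl
    · exact absurd hlt ((List.pairwise_cons.mp hpw).1 a ha)
    · exact ha
  · exact hb

theorem bRow_apply_of_isUpperSet (f : P → ℝ) (A : WithBot (WithTop P) → ℝ)
    (hA1 : A ((⊤ : WithTop P) : WithBot (WithTop P)) = 1)
    (hA2 : ∀ x : P, A (emb x) =
      alpha2B f x * ∑ y : WithBot (WithTop P), if emb x ⋖ y then A y else 0)
    {ys : List P} (hnd : ys.Nodup) (hpw : ys.Pairwise fun u v => ¬ v < u)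
    (hup : IsUpperSet {y | y ∈ ys}) : ∀ x ∈ ys, bRow ys f x = (A (emb x))⁻¹ := by
  induction ys with
  | nil => simp
  | cons x t ih =>
    obtain ⟨hxt, hndt⟩ := List.nodup_cons.mp hnd
    have ih := ih hndt (List.pairwise_cons.mp hpw).2 (isUpperSet_of_cons hpw hup)
    have hbL : bL (bRow t f) x = bL f x := bL_congr fun u hu =>
      bRow_apply_of_not_mem f fun hut => (List.pairwise_cons.mp hpw).1 u hut hu
    have hbR : bR (bRow t f) x =
        (∑ y : WithBot (WithTop P), if emb x ⋖ y then A y else 0)⁻¹ :=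
      bR_eq_inv_sum hA1 fun u hu =>
        ih u ((List.mem_cons.mp (hup hu.le List.mem_cons_self)).resolve_left hu.ne')
    have hα : alpha2B (bRow t f) x = alpha2B f x := by
      rw [alpha2B_eq_div_bL, alpha2B_eq_div_bL, hbL, bRow_apply_of_not_mem f hxt]
    intro z hz
    rcases List.mem_cons.mp hz with rfl | hzt
    · change bToggle z (bRow t f) z = _
      rw [bToggle_apply_self, hα, hbR, inv_inv, hA2]
    · exact (Function.update_of_ne (by rintro rfl; exact hxt hzt) _ _).trans (ih z hzt)

theorem stmt3_general {P : Type*} [Fintype P] [PartialOrder P]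
    (xs : List P) (hxs : IsLinearExt xs)
    (f : P → ℝ)
    (A : WithBot (WithTop P) → ℝ)
    (hA1 : A ((⊤ : WithTop P) : WithBot (WithTop P)) = 1)
    (hA2 : ∀ x : P, A (emb x) =
      alpha2B f x * ∑ y : WithBot (WithTop P), if emb x ⋖ y then A y else 0) :
    ∀ x : P, bRow xs f x = (A (emb x))⁻¹ := by
  obtain ⟨hnd, hmem, hpw⟩ := hxs
  intro x
  exact bRow_apply_of_isUpperSet f A hA1 hA2 hnd hpw (fun _ b _ _ => hmem b) x (hmem x)

/-- `ρ_B = α₁ ∘ α₃ ∘ α₂` on `(ℝ>0)^P`: if `A` realizes the downward recursion defining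
`α₃ (α₂ f)` (with `A(1̂) = 1` and `A(x) = (α₂ f)(x) · Σ { A(y) : y ∈ P̂, y ⋗ x }`), then
`(ρ_B f)(x) = A(x)⁻¹` for all `x ∈ P`. -/
theorem stmt3 {P : Type*} [Fintype P] [PartialOrder P]
    (xs : List P) (hxs : IsLinearExt xs)
    (f : P → ℝ) (hf : ∀ x, 0 < f x)
    (A : WithBot (WithTop P) → ℝ)
    (hA1 : A ((⊤ : WithTop P) : WithBot (WithTop P)) = 1)
    (hA2 : ∀ x : P, A (emb x) =
      alpha2B f x * ∑ y : WithBot (WithTop P), if emb x ⋖ y then A y else 0) :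
    ∀ x : P, bRow xs f x = (A (emb x))⁻¹ :=
  stmt3_general xs hxs f A hA1 hA2

end
end

section
/- (Cameron–Fon-der-Flaass theorem) For P = [a]×[b], combinatorial rowmotion on the set J(P) of order ideals of P has order dividing a+b: ρ^{a+b} is the identity map on J(P), where ρ(I) is the down-closure of the set of minimal elements of the complement P∖I. -/
open scoped Classical

noncomputable section

variable {P : Type*} [Fintype P] [PartialOrder P]

/-- `I` is an order ideal (downset). -/
def IsOrderIdeal {Q : Type*} [PartialOrder Q] (I : Set Q) : Prop :=
  ∀ ⦃x⦄, x ∈ I → ∀ ⦃y⦄, y ≤ x → y ∈ I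

/-- Combinatorial rowmotion: `ρ(I)` is the down-closure of the set of minimal elements of the
complementary filter `P ∖ I`. -/
def combRow {Q : Type*} [PartialOrder Q] (I : Set Q) : Set Q :=
  {y | ∃ x, x ∉ I ∧ (∀ z, z ∉ I → z ≤ x → z = x) ∧ y ≤ x}

/-! The maximal elements of `ρ I` are the minimal elements of `P ∖ I`. In `[a] × [b]`, row `i + 1`
contains a minimal element of `P ∖ I` exactly when row `i` contains a maximal element of `I`,
and row `1` contains one exactly when column `b` contains no maximal element of `I`; likewise
with rows and columns exchanged. Hence `ρ` rotates the Stanley–Thomas word of `I` (the rows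
containing a maximal element of `I`, followed by the columns containing none) by one position.
The maximal elements of `I` form an antichain, i.e. the graph of an order-reversing bijection
between their rows and their columns, so the word determines `I`, and `ρ^(a+b) I = I`. -/

open Set

section Poset

variable {α β : Type*} [PartialOrder α] [PartialOrder β]

theorem isOrderIdeal_combRow (I : Set α) : IsOrderIdeal (combRow I) := by
  rintro x ⟨m, hmI, hmin, hxm⟩ y hyx
  exact ⟨m, hmI, hmin, hyx.trans hxm⟩

theorem isOrderIdeal_iterate_combRow {I : Set α} (hI : IsOrderIdeal I) :
    ∀ n, IsOrderIdeal (combRow^[n] I)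
  | 0 => hI
  | n + 1 => by rw [Function.iterate_succ_apply']; exact isOrderIdeal_combRow _

theorem IsOrderIdeal.preimage {I : Set β} (hI : IsOrderIdeal I) {f : α → β} (hf : Monotone f) :
    IsOrderIdeal (f ⁻¹' I) :=
  fun _ hx _ hyx => hI hx (hf hyx)

theorem maximal_mem_combRow_iff {I : Set α} {x : α} :
    Maximal (· ∈ combRow I) x ↔ Minimal (· ∉ I) x := by
  constructor
  · rintro ⟨⟨m, hmI, hmin, hxm⟩, hmax⟩
    obtain rfl : x = m := le_antisymm hxm (hmax ⟨m, hmI, hmin, le_rfl⟩ hxm)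
    exact ⟨hmI, fun z hz hzx => (hmin z hz hzx).ge⟩
  · intro hx
    refine ⟨⟨x, hx.prop, fun z hz hzx => hx.eq_of_le hz hzx, le_rfl⟩, ?_⟩
    rintro y ⟨m, hmI, hmin, hym⟩ hxy
    rw [hmin x hx.prop (hxy.trans hym)]
    exact hym

theorem combRow_preimage (e : α ≃o β) (I : Set β) : combRow (e ⁻¹' I) = e ⁻¹' combRow I := by
  ext y
  simp only [combRow, mem_preimage, mem_ofPred_eq]
  constructor
  · rintro ⟨x, hxI, hmin, hyx⟩
    refine ⟨e x, hxI, fun z hz hzx => ?_, e.monotone hyx⟩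
    rw [← e.apply_symm_apply z, hmin _ (by simpa) (e.symm_apply_le.2 hzx)]
  · rintro ⟨x, hxI, hmin, hyx⟩
    refine ⟨e.symm x, by simpa, fun z hz hzx => ?_, e.le_symm_apply.2 hyx⟩
    rw [← e.symm_apply_apply z, hmin _ hz (e.le_symm_apply.1 hzx)]

theorem IsOrderIdeal.subset_of_forall_maximal [Finite α] {I J : Set α} (hJ : IsOrderIdeal J)
    (h : ∀ x, Maximal (· ∈ I) x → x ∈ J) : I ⊆ J := fun _ hx =>
  let ⟨m, hxm, hm⟩ := Finite.exists_le_maximal (p := (· ∈ I)) hx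
  hJ (h m hm) hxm

end Poset

theorem eq_of_ncard_inter_Iio_eq {β : Type*} [LinearOrder β] [Finite β] {S : Set β} {e e' : β}
    (he : e ∈ S) (he' : e' ∈ S) (h : (S ∩ Iio e).ncard = (S ∩ Iio e').ncard) : e = e' := by
  have hlt : ∀ {e e'}, e ∈ S → e < e' → (S ∩ Iio e).ncard < (S ∩ Iio e').ncard :=
    fun he hee' => ncard_lt_ncard <|
      (ssubset_iff_of_subset <| inter_subset_inter_right _ (Iio_subset_Iio hee'.le)).2
        ⟨_, ⟨he, hee'⟩, fun hmem => hmem.2.false⟩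
  rcases lt_trichotomy e e' with hee' | rfl | he'e
  · exact absurd h (hlt he hee').ne
  · rfl
  · exact absurd h (hlt he' he'e).ne'

section ProductOfChains

variable {α β : Type*} [LinearOrder α] [LinearOrder β] {I : Set (α × β)} {x y : α × β}

def maxRows (I : Set (α × β)) : Set α := Prod.fst '' {x | Maximal (· ∈ I) x}

def maxCols (I : Set (α × β)) : Set β := Prod.snd '' {x | Maximal (· ∈ I) x}

theorem maxRows_preimage_prodComm (I : Set (β × α)) :
    maxRows (OrderIso.prodComm ⁻¹' I) = maxCols I := by
  have : {x | Maximal (· ∈ OrderIso.prodComm ⁻¹' I) x} =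
      Prod.swap '' {x : β × α | Maximal (· ∈ I) x} := by
    rw [image_swap_eq_preimage_swap]
    ext x
    exact ((OrderIso.prodComm (α := α) (β := β)).toOrderEmbedding.maximal_apply_mem_iff
      fun z _ => (OrderIso.prodComm (α := α) (β := β)).surjective z).symm
  rw [maxRows, this, image_image]
  rfl

theorem maxCols_preimage_prodComm (I : Set (β × α)) :
    maxCols (OrderIso.prodComm ⁻¹' I) = maxRows I := by
  simpa [← preimage_comp] using (maxRows_preimage_prodComm (OrderIso.prodComm ⁻¹' I)).symm

theorem Maximal.fst_lt_iff_snd_lt (hx : Maximal (· ∈ I) x) (hy : Maximal (· ∈ I) y) :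
    x.1 < y.1 ↔ y.2 < x.2 := by
  constructor
  · intro h
    by_contra! h'
    exact h.ne' (congrArg Prod.fst (hx.eq_of_ge hy.prop ⟨h.le, h'⟩))
  · intro h
    by_contra! h'
    exact h.ne' (congrArg Prod.snd (hy.eq_of_ge hx.prop ⟨h', h.le⟩))

theorem Maximal.eq_of_fst_eq (hx : Maximal (· ∈ I) x) (hy : Maximal (· ∈ I) y)
    (h : x.1 = y.1) : x = y := by
  rcases le_total x.2 y.2 with h2 | h2
  · exact (hx.eq_of_ge hy.prop ⟨h.le, h2⟩).symm
  · exact hy.eq_of_ge hx.prop ⟨h.ge, h2⟩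

theorem Maximal.eq_of_snd_eq (hx : Maximal (· ∈ I) x) (hy : Maximal (· ∈ I) y)
    (h : x.2 = y.2) : x = y := by
  rcases le_total x.1 y.1 with h1 | h1
  · exact (hx.eq_of_ge hy.prop ⟨h1, h.le⟩).symm
  · exact hy.eq_of_ge hx.prop ⟨h1, h.ge⟩

/-- Both sides count the maximal elements of `I` in the rows after `x`, which are those in the
columns before `x`. -/
theorem ncard_maxRows_inter_Ioi (hx : Maximal (· ∈ I) x) :
    (maxRows I ∩ Ioi x.1).ncard = (maxCols I ∩ Iio x.2).ncard := by
  rw [maxRows, maxCols, ← image_inter_preimage, ← image_inter_preimage,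
    InjOn.ncard_image fun y hy z hz => hy.1.eq_of_fst_eq hz.1,
    InjOn.ncard_image fun y hy z hz => hy.1.eq_of_snd_eq hz.1]
  congr 1
  ext y
  exact and_congr_right hx.fst_lt_iff_snd_lt

variable [Finite α] [Finite β]

theorem eq_of_maxRows_eq_of_maxCols_eq {J : Set (α × β)} (hI : IsOrderIdeal I)
    (hJ : IsOrderIdeal J) (hr : maxRows I = maxRows J) (hc : maxCols I = maxCols J) : I = J := by
  have key : ∀ {I J : Set (α × β)}, maxRows I = maxRows J → maxCols I = maxCols J →
      ∀ x, Maximal (· ∈ I) x → Maximal (· ∈ J) x := by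
    intro I J hr hc x hx
    obtain ⟨y, hy, hyx⟩ : x.1 ∈ maxRows J := hr ▸ mem_image_of_mem _ hx
    have hxy : x.2 = y.2 := eq_of_ncard_inter_Iio_eq (S := maxCols J)
      (hc ▸ mem_image_of_mem _ hx) (mem_image_of_mem _ hy) (by
        rw [← ncard_maxRows_inter_Ioi hy, hyx, ← hr, ncard_maxRows_inter_Ioi hx, hc])
    rwa [Prod.ext hyx.symm hxy]
  exact (hJ.subset_of_forall_maximal fun x hx => (key hr hc x hx).prop).antisymm
    (hI.subset_of_forall_maximal fun x hx => (key hr.symm hc.symm x hx).prop)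

theorem mem_maxRows_combRow_of_covBy (hI : IsOrderIdeal I) {i i' : α} (h : i ⋖ i') :
    i' ∈ maxRows (combRow I) ↔ i ∈ maxRows I := by
  simp only [maxRows, mem_image, mem_ofPred_eq, maximal_mem_combRow_iff]
  constructor
  · rintro ⟨⟨_, j⟩, hmin, rfl⟩
    have hij : (i, j) ∈ I := by
      by_contra hij
      exact h.lt.ne (congrArg Prod.fst (hmin.eq_of_le hij ⟨h.lt.le, le_rfl⟩))
    obtain ⟨m, him, hm⟩ := Finite.exists_le_maximal (p := (· ∈ I)) hij
    refine ⟨m, hm, le_antisymm (not_lt.1 fun hlt => hmin.prop ?_) him.1⟩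
    exact hI hm.prop ⟨h.ge_of_gt hlt, him.2⟩
  · rintro ⟨⟨_, j⟩, hmax, rfl⟩
    have hij : (i', j) ∉ I := fun hij =>
      h.lt.ne' (congrArg Prod.fst (hmax.eq_of_ge hij ⟨h.lt.le, le_rfl⟩))
    obtain ⟨m, hmi, hm⟩ := Finite.exists_le_minimal (p := (· ∉ I)) hij
    refine ⟨m, hm, le_antisymm hmi.1 (not_lt.1 fun hlt => hm.prop ?_)⟩
    exact hI hmax.prop ⟨h.le_of_lt hlt, hmi.2⟩

theorem mem_maxRows_combRow_of_isBot (hI : IsOrderIdeal I) {i : α} {j : β} (hi : IsBot i)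
    (hj : IsTop j) : i ∈ maxRows (combRow I) ↔ j ∉ maxCols I := by
  have hrow : i ∈ maxRows (combRow I) ↔ (i, j) ∉ I := by
    simp only [maxRows, mem_image, mem_ofPred_eq, maximal_mem_combRow_iff]
    constructor
    · rintro ⟨x, hx, rfl⟩ hxj
      exact hx.prop (hI hxj ⟨le_rfl, hj x.2⟩)
    · intro hij
      obtain ⟨m, hmi, hm⟩ := Finite.exists_le_minimal (p := (· ∉ I)) hij
      exact ⟨m, hm, le_antisymm hmi.1 (hi m.1)⟩
  have hcol : j ∈ maxCols I ↔ (i, j) ∈ I := by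
    simp only [maxCols, mem_image, mem_ofPred_eq]
    constructor
    · rintro ⟨x, hx, rfl⟩
      exact hI hx.prop ⟨hi x.1, le_rfl⟩
    · intro hij
      obtain ⟨m, him, hm⟩ := Finite.exists_le_maximal (p := (· ∈ I)) hij
      exact ⟨m, hm, le_antisymm (hj m.2) him.2⟩
  rw [hrow, hcol]

theorem mem_maxCols_combRow_of_covBy (hI : IsOrderIdeal I) {j j' : β} (h : j ⋖ j') :
    j' ∈ maxCols (combRow I) ↔ j ∈ maxCols I := by
  have := mem_maxRows_combRow_of_covBy (hI.preimage OrderIso.prodComm.monotone) h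
  rwa [combRow_preimage, maxRows_preimage_prodComm, maxRows_preimage_prodComm] at this

theorem mem_maxCols_combRow_of_isBot (hI : IsOrderIdeal I) {i : α} {j : β} (hj : IsBot j)
    (hi : IsTop i) : j ∈ maxCols (combRow I) ↔ i ∉ maxRows I := by
  have := mem_maxRows_combRow_of_isBot (hI.preimage OrderIso.prodComm.monotone) hj hi
  rwa [combRow_preimage, maxRows_preimage_prodComm, maxCols_preimage_prodComm] at this

end ProductOfChains

section StanleyThomasWord

variable {a b : ℕ} {I J : Set (Fin a × Fin b)}

def stanleyThomasWord (I : Set (Fin a × Fin b)) (k : ℕ) : Prop :=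
  if h : k < a then ⟨k, h⟩ ∈ maxRows I else ∃ j : Fin b, a + j = k ∧ j ∉ maxCols I

theorem stanleyThomasWord_val (I : Set (Fin a × Fin b)) (i : Fin a) :
    stanleyThomasWord I i ↔ i ∈ maxRows I := by
  rw [stanleyThomasWord, dif_pos i.isLt]

theorem stanleyThomasWord_add_val (I : Set (Fin a × Fin b)) (j : Fin b) :
    stanleyThomasWord I (a + j) ↔ j ∉ maxCols I := by
  rw [stanleyThomasWord, dif_neg (by omega)]
  constructor
  · rintro ⟨j', hj', hj'I⟩
    rwa [← Fin.ext (Nat.add_left_cancel hj')]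
  · exact fun hj => ⟨j, rfl, hj⟩

theorem stanleyThomasWord_combRow (ha : 1 ≤ a) (hb : 1 ≤ b) (hI : IsOrderIdeal I) {k : ℕ}
    (hk : k < a + b) :
    stanleyThomasWord (combRow I) ((k + 1) % (a + b)) ↔ stanleyThomasWord I k := by
  have hbot : ∀ {n} (h : 0 < n), IsBot (⟨0, h⟩ : Fin n) := fun _ j => Nat.zero_le j.val
  have htop : ∀ {n} (h : n - 1 < n), IsTop (⟨n - 1, h⟩ : Fin n) :=
    fun _ j => Nat.le_sub_one_of_lt j.isLt
  have hcov : ∀ {n k} (h : k + 1 < n), (⟨k, by omega⟩ : Fin n) ⋖ ⟨k + 1, h⟩ :=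
    fun _ => Fin.covBy_iff.2 (Order.covBy_add_one _)
  rcases Nat.lt_or_ge (k + 1) (a + b) with hk1 | hk1
  · rw [Nat.mod_eq_of_lt hk1]
    rcases lt_trichotomy (k + 1) a with hka | hka | hka
    · exact (stanleyThomasWord_val _ ⟨k + 1, hka⟩).trans
        ((mem_maxRows_combRow_of_covBy hI (hcov hka)).trans (stanleyThomasWord_val I _).symm)
    · obtain rfl : k = a - 1 := by omega
      rw [hka]
      exact (stanleyThomasWord_add_val _ ⟨0, hb⟩).trans <| (not_congr
        (mem_maxCols_combRow_of_isBot hI (hbot hb) (htop (by omega)))).trans <|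
        not_not.trans (stanleyThomasWord_val I _).symm
    · obtain ⟨j, rfl⟩ : ∃ j, k = a + j := ⟨k - a, by omega⟩
      exact (stanleyThomasWord_add_val _ ⟨j + 1, by omega⟩).trans <|
        (not_congr (mem_maxCols_combRow_of_covBy hI (hcov (by omega)))).trans
        (stanleyThomasWord_add_val I ⟨j, by omega⟩).symm
  · obtain rfl : k = a + (b - 1) := by omega
    rw [show a + (b - 1) + 1 = a + b by omega, Nat.mod_self]
    exact (stanleyThomasWord_val _ ⟨0, ha⟩).trans <|
      (mem_maxRows_combRow_of_isBot hI (hbot ha) (htop (by omega))).trans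
      (stanleyThomasWord_add_val I _).symm

theorem stanleyThomasWord_iterate_combRow (ha : 1 ≤ a) (hb : 1 ≤ b) (hI : IsOrderIdeal I)
    (n : ℕ) {k : ℕ} (hk : k < a + b) :
    stanleyThomasWord (combRow^[n] I) ((k + n) % (a + b)) ↔ stanleyThomasWord I k := by
  induction n with
  | zero => rw [Function.iterate_zero_apply, Nat.add_zero, Nat.mod_eq_of_lt hk]
  | succ n ih =>
    rw [Function.iterate_succ_apply', ← Nat.add_assoc, ← Nat.mod_add_mod]
    exact (stanleyThomasWord_combRow ha hb (isOrderIdeal_iterate_combRow hI n)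
      (Nat.mod_lt _ (by omega))).trans ih

theorem eq_of_stanleyThomasWord_iff (hI : IsOrderIdeal I) (hJ : IsOrderIdeal J)
    (h : ∀ k < a + b, stanleyThomasWord I k ↔ stanleyThomasWord J k) : I = J := by
  refine eq_of_maxRows_eq_of_maxCols_eq hI hJ (ext fun i => ?_) (ext fun j => ?_)
  · simpa only [stanleyThomasWord_val] using h i (by omega)
  · simpa only [stanleyThomasWord_add_val, not_iff_not] using h (a + j) (by omega)

end StanleyThomasWord

/-- The Cameron–Fon-der-Flaass theorem: combinatorial rowmotion on the order ideals of
`[a] × [b]` has order dividing `a + b`. -/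
theorem stmt16 (a b : ℕ) (ha : 1 ≤ a) (hb : 1 ≤ b)
    (I : Set (Fin a × Fin b)) (hI : IsOrderIdeal I) :
    combRow^[a + b] I = I := by
  refine eq_of_stanleyThomasWord_iff (isOrderIdeal_iterate_combRow hI _) hI fun k hk => ?_
  simpa only [Nat.add_mod_right, Nat.mod_eq_of_lt hk] using
    stanleyThomasWord_iterate_combRow ha hb hI (a + b) hk
end
end

section
/- Piecewise-linear rowmotion restricted to the vertices of the order polytope recovers combinatorial rowmotion: let P be a finite poset, let I be an order ideal of P, and let f ∈ O(P) be the indicator function of the filter P∖I (so f(x) = 1 if x ∉ I and f(x) = 0 if x ∈ I). Then ρ_P(f) is the indicator function of the filter P∖ρ(I), where ρ(I) is the down-closure of the set of minimal elements of P∖I. -/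
open scoped Classical

noncomputable section

variable {P : Type*} [Fintype P] [PartialOrder P]

/-!
When the toggles of `ρ_P = τ_{x₁} ∘ ⋯ ∘ τ_{x_p}` are applied from the top of the linear
extension down, at the moment `x` is toggled its lower covers still carry the values of `f`
and its upper covers already carry those of `ρ_P f`. Hence any `g` with
`g x = L_f(x) + R_g(x) - f(x)` for all `x` equals `ρ_P f`.

For `f` the indicator of `P ∖ I` all values are `0` or `1`, so `L_f(x) = 1` iff some lower
cover of `x` lies outside `I`, and `R_g(x) = 0` for `g` the indicator of `P ∖ ρ(I)` iff some
upper cover lies in `ρ(I)`. The recurrence then holds because for `x ∈ I`, `x ∈ ρ(I)` iff some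
upper cover of `x` is in `ρ(I)`, while for `x ∉ I`, `x ∈ ρ(I)` iff all lower covers of `x` are
in `I`.
-/

section Rowmotion

def idealVertex {α : Type*} (J : Set α) : α → ℝ := fun x => if x ∈ J then 0 else 1

lemma extendHat_idealVertex_mem {α : Type*} (J : Set α) (y : WithBot (WithTop α)) :
    extendHat 0 1 (idealVertex J) y ∈ ({0, 1} : Set ℝ) := by
  induction y using WithBot.recBotCoe with
  | bot => exact .inl rfl
  | coe t =>
    induction t using WithTop.recTopCoe with
    | top => exact .inr rfl
    | coe z => by_cases hz : z ∈ J <;> simp [extendHat, idealVertex, hz]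

lemma extendHat_congr {α : Type*} {v₀ v₁ : ℝ} {f g : α → ℝ} {y : WithBot (WithTop α)}
    (h : ∀ z, y = emb z → f z = g z) : extendHat v₀ v₁ f y = extendHat v₀ v₁ g y := by
  induction y using WithBot.recBotCoe with
  | bot => rfl
  | coe t =>
    induction t using WithTop.recTopCoe with
    | top => rfl
    | coe z => exact h z rfl

variable {α : Type*} [PartialOrder α]

lemma csSup_eq_ite_of_subset_zero_one {S : Set ℝ} (hS : S ⊆ {0, 1}) :
    sSup S = if 1 ∈ S then 1 else 0 := by
  split_ifs with h1
  · exact IsGreatest.csSup_eq ⟨h1, fun a ha => by rcases hS ha with rfl | rfl <;> norm_num⟩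
  · have h0 : S ⊆ {0} := fun a ha => (hS ha).resolve_right (by rintro rfl; exact h1 ha)
    rcases Set.subset_singleton_iff_eq.1 h0 with rfl | rfl
    · exact Real.sSup_empty
    · exact csSup_singleton 0

lemma csInf_eq_ite_of_subset_zero_one {S : Set ℝ} (hne : S.Nonempty) (hS : S ⊆ {0, 1}) :
    sInf S = if 0 ∈ S then 0 else 1 := by
  split_ifs with h0
  · exact IsLeast.csInf_eq ⟨h0, fun a ha => by rcases hS ha with rfl | rfl <;> norm_num⟩
  · have h1 : S ⊆ {1} := fun a ha => (hS ha).resolve_left (by rintro rfl; exact h0 ha)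
    rw [(Set.subset_singleton_iff_eq.1 h1).resolve_left hne.ne_empty, csInf_singleton]

lemma emb_covBy_emb {x y : α} : emb y ⋖ emb x ↔ y ⋖ x :=
  WithBot.coe_covBy_coe.trans WithTop.coe_covBy_coe

lemma exists_covBy_emb_iff {x : α} {p : WithBot (WithTop α) → Prop} (hbot : ¬ p ⊥) :
    (∃ y, y ⋖ emb x ∧ p y) ↔ ∃ z, z ⋖ x ∧ p (emb z) := by
  refine ⟨fun ⟨y, hy, hp⟩ => ?_, fun ⟨z, hz, hp⟩ => ⟨emb z, emb_covBy_emb.2 hz, hp⟩⟩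
  induction y using WithBot.recBotCoe with
  | bot => exact absurd hp hbot
  | coe t =>
    induction t using WithTop.recTopCoe with
    | top => exact absurd (WithBot.coe_lt_coe.1 hy.lt) not_top_lt
    | coe z => exact ⟨z, emb_covBy_emb.1 hy, hp⟩

lemma exists_emb_covBy_iff {x : α} {p : WithBot (WithTop α) → Prop} (htop : ¬ p ⊤) :
    (∃ y, emb x ⋖ y ∧ p y) ↔ ∃ z, x ⋖ z ∧ p (emb z) := by
  refine ⟨fun ⟨y, hy, hp⟩ => ?_, fun ⟨z, hz, hp⟩ => ⟨emb z, emb_covBy_emb.2 hz, hp⟩⟩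
  induction y using WithBot.recBotCoe with
  | bot => exact absurd hy.lt (WithBot.not_lt_bot _)
  | coe t =>
    induction t using WithTop.recTopCoe with
    | top => exact absurd hp htop
    | coe z => exact ⟨z, emb_covBy_emb.1 hy, hp⟩

lemma plL_congr_s17 {f g : α → ℝ} {x : α} (h : ∀ y, y ⋖ x → f y = g y) :
    plL f x = plL g x := by
  refine congrArg sSup (Set.image_congr fun y hy => extendHat_congr fun z hz => h z ?_)
  exact emb_covBy_emb.1 (hz ▸ hy)

lemma plR_congr {f g : α → ℝ} {x : α} (h : ∀ z, x ⋖ z → f z = g z) :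
    plR f x = plR g x := by
  refine congrArg sInf (Set.image_congr fun y hy => extendHat_congr fun z hz => h z ?_)
  exact emb_covBy_emb.1 (hz ▸ hy)

lemma plL_idealVertex (J : Set α) (x : α) :
    plL (idealVertex J) x = if ∃ y, y ⋖ x ∧ y ∉ J then 1 else 0 := by
  rw [plL, csSup_eq_ite_of_subset_zero_one
    (by rintro _ ⟨y, -, rfl⟩; exact extendHat_idealVertex_mem J y)]
  refine if_congr ?_ rfl rfl
  refine (exists_covBy_emb_iff (p := fun y => extendHat 0 1 (idealVertex J) y = 1)
    zero_ne_one).trans ?_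
  simp [extendHat, emb, idealVertex]

lemma plR_idealVertex [IsStronglyAtomic α] (J : Set α) (x : α) :
    plR (idealVertex J) x = if ∃ z, x ⋖ z ∧ z ∈ J then 0 else 1 := by
  have hne : {y | emb x ⋖ y}.Nonempty := by
    by_cases hx : IsMax x
    · exact ⟨⊤, WithBot.coe_covBy_coe.2 (WithTop.coe_covBy_top.2 hx)⟩
    · obtain ⟨z, hxz⟩ := not_isMax_iff.1 hx
      obtain ⟨c, hc, -⟩ := exists_covBy_le_of_lt hxz
      exact ⟨emb c, emb_covBy_emb.2 hc⟩
  rw [plR, csInf_eq_ite_of_subset_zero_one (hne.image _)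
    (by rintro _ ⟨y, -, rfl⟩; exact extendHat_idealVertex_mem J y)]
  refine if_congr ?_ rfl rfl
  refine (exists_emb_covBy_iff (p := fun y => extendHat 0 1 (idealVertex J) y = 0)
    one_ne_zero).trans ?_
  simp [extendHat, emb, idealVertex]

lemma mem_combRow_iff_exists_covBy_of_mem [IsStronglyAtomic α] {I : Set α} {x : α}
    (hx : x ∈ I) :
    x ∈ combRow I ↔ ∃ z, x ⋖ z ∧ z ∈ combRow I := by
  constructor
  · rintro ⟨m, hmI, hmin, hxm⟩
    obtain ⟨c, hxc, hcm⟩ := exists_covBy_le_of_lt (hxm.lt_of_ne (by rintro rfl; exact hmI hx))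
    exact ⟨c, hxc, m, hmI, hmin, hcm⟩
  · rintro ⟨z, hxz, m, hmI, hmin, hzm⟩
    exact ⟨m, hmI, hmin, hxz.le.trans hzm⟩

lemma mem_combRow_iff_forall_covBy_of_notMem [IsStronglyCoatomic α] {I : Set α}
    (hI : IsOrderIdeal I) {x : α} (hx : x ∉ I) :
    x ∈ combRow I ↔ ∀ y, y ⋖ x → y ∈ I := by
  constructor
  · rintro ⟨m, hmI, hmin, hxm⟩ y hyx
    by_contra hyI
    exact hyx.ne ((hmin y hyI (hyx.le.trans hxm)).trans (hmin x hx hxm).symm)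
  · refine fun h => ⟨x, hx, fun z hzI hzx => ?_, le_rfl⟩
    by_contra hzx'
    obtain ⟨c, hzc, hcx⟩ := exists_le_covBy_of_lt (hzx.lt_of_ne hzx')
    exact hzI (hI (h c hcx) hzc)

lemma notMem_combRow_of_lt {I : Set α} {x z : α} (hx : x ∉ I) (hxz : x < z) :
    z ∉ combRow I := by
  rintro ⟨m, -, hmin, hzm⟩
  exact (hxz.trans_le hzm).ne (hmin x hx (hxz.le.trans hzm))

lemma idealVertex_combRow_apply [IsStronglyAtomic α] [IsStronglyCoatomic α] {I : Set α}
    (hI : IsOrderIdeal I) (x : α) :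
    idealVertex (combRow I) x =
      plL (idealVertex I) x + plR (idealVertex (combRow I)) x - idealVertex I x := by
  rw [plL_idealVertex, plR_idealVertex]
  by_cases hxI : x ∈ I
  · have hL : ¬ ∃ y, y ⋖ x ∧ y ∉ I := fun ⟨y, hyx, hyI⟩ => hyI (hI hxI hyx.le)
    simp only [idealVertex, mem_combRow_iff_exists_covBy_of_mem hxI, if_pos hxI, if_neg hL]
    ring
  · have hR : ¬ ∃ z, x ⋖ z ∧ z ∈ combRow I :=
      fun ⟨z, hxz, hz⟩ => notMem_combRow_of_lt hxI hxz.lt hz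
    simp only [idealVertex, mem_combRow_iff_forall_covBy_of_notMem hI hxI, if_neg hxI,
      if_neg hR]
    have hL : (∃ y, y ⋖ x ∧ y ∉ I) ↔ ¬ ∀ y, y ⋖ x → y ∈ I := by simp
    rw [if_congr hL rfl rfl]
    split_ifs <;> ring

lemma plRow_eq_ite_mem {f g : α → ℝ} (hg : ∀ x, g x = plL f x + plR g x - f x)
    {xs : List α} (hnd : xs.Nodup) (hpw : xs.Pairwise fun u v => ¬ v < u)
    (hup : IsUpperSet {a | a ∈ xs}) :
    plRow xs f = fun a => if a ∈ xs then g a else f a := by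
  induction xs with
  | nil => funext a; simp [plRow]
  | cons x rest ih =>
    obtain ⟨hx, hnd'⟩ := List.nodup_cons.1 hnd
    obtain ⟨hbelow, hpw'⟩ := List.pairwise_cons.1 hpw
    have hup' : IsUpperSet {a | a ∈ rest} := fun a b hab ha => by
      rcases List.mem_cons.1 (hup hab (List.mem_cons_of_mem x ha)) with rfl | hb
      · exact absurd (hab.lt_of_ne (by rintro rfl; exact hx ha)) (hbelow a ha)
      · exact hb
    have habove : ∀ z, x ⋖ z → z ∈ rest := fun z hxz =>
      (List.mem_cons.1 (hup hxz.le List.mem_cons_self)).resolve_left hxz.ne'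
    change plToggle x (plRow rest f) = _
    rw [ih hnd' hpw' hup']
    funext a
    by_cases hax : a = x
    · subst hax
      rw [plToggle, Function.update_self, if_pos List.mem_cons_self, hg a, if_neg hx,
        plL_congr_s17 fun y hya => if_neg fun hy => hbelow y hy hya.lt,
        plR_congr fun z haz => if_pos (habove z haz)]
    · simp [plToggle, hax]

lemma plRow_eq_of_isLinearExt {f g : α → ℝ} (hg : ∀ x, g x = plL f x + plR g x - f x)
    {xs : List α} (hxs : IsLinearExt xs) : plRow xs f = g := by
  obtain ⟨hnd, hall, hpw⟩ := hxs
  simpa [hall] using plRow_eq_ite_mem hg hnd hpw fun _ b _ _ => hall b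

end Rowmotion

/-- Piecewise-linear rowmotion restricted to the vertices of the order polytope recovers
combinatorial rowmotion: on the indicator function of the filter `P ∖ I` it produces the
indicator function of the filter `P ∖ ρ(I)`. -/
theorem stmt17 {P : Type*} [Fintype P] [PartialOrder P]
    (xs : List P) (hxs : IsLinearExt xs)
    (I : Set P) (hI : IsOrderIdeal I) :
    plRow xs (fun x => if x ∈ I then 0 else 1) =
      fun x => if x ∈ combRow I then (0 : ℝ) else 1 :=
  plRow_eq_of_isLinearExt (idealVertex_combRow_apply hI) hxs

end
end
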